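/- Suppose θ < 0, G' has no negative cycle, and T is an SPT of G rooted at s. Let A ⊆ V be a set containing s, containing y₀, and containing every vertex whose tree path from s in T traverses e₀. Suppose that for every edge (x, y) ∈ E with x ∈ A and y ∉ A one has dist_{G'}(x) + ω(x, y) ≥ dist_G(y). Then dist_{G'}(u) = dist_G(u) for every vertex u ∉ A. -/

import Mathlib

namespace DynSPT

variable {V : Type*}

/-- The list of consecutive edges of a path given as a list of vertices. -/
def edgeList (l : List V) : List (V × V) := l.zip l.tail

/-- The length of a path with respect to the weight function `ω`. -/
def len (ω : V → V → ℝ) (l : List V) : ℝ :=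
  ((edgeList l).map fun p => ω p.1 p.2).sum

/-- `l` is a path in the directed graph with edge relation `E`. -/
def IsWalk (E : V → V → Prop) (l : List V) : Prop := l ≠ [] ∧ l.Chain' E

/-- `l` is a path from `u` to `v` in the directed graph with edge relation `E`. -/
def IsWalkFrom (E : V → V → Prop) (l : List V) (u v : V) : Prop :=
  IsWalk E l ∧ l.head? = some u ∧ l.getLast? = some v

/-- The path `l` traverses the edge `e`. -/
def Traverses (l : List V) (e : V × V) : Prop := e ∈ edgeList l

/-- `l` is a cycle: a path with at least one edge whose first and last vertices agree. -/
def IsCycle (E : V → V → Prop) (l : List V) : Prop :=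
  ∃ v, IsWalkFrom E l v v ∧ 2 ≤ l.length

/-- The weighted directed graph `(E, ω)` has a negative cycle. -/
def HasNegCycle (E : V → V → Prop) (ω : V → V → ℝ) : Prop :=
  ∃ l, IsCycle E l ∧ len ω l < 0

/-- The weighted directed graph `(E, ω)` has a zero-length cycle. -/
def HasZeroCycle (E : V → V → Prop) (ω : V → V → ℝ) : Prop :=
  ∃ l, IsCycle E l ∧ len ω l = 0

/-- The distance from `s` to `v`: the infimum of the lengths of paths from `s` to `v`. -/
noncomputable def dist (E : V → V → Prop) (ω : V → V → ℝ) (s v : V) : ℝ :=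
  sInf {L : ℝ | ∃ l, IsWalkFrom E l s v ∧ len ω l = L}

/-- A spanning tree of the directed graph `E` rooted at `s`, recorded by the parent
function together with, for every vertex `v`, the tree path from `s` to `v`. -/
structure RootedTree (E : V → V → Prop) (s : V) where
  parent : V → V
  path : V → List V
  path_root : path s = [s]
  parent_edge : ∀ v, v ≠ s → E (parent v) v
  path_eq : ∀ v, v ≠ s → path v = path (parent v) ++ [v]
  path_isWalkFrom : ∀ v, IsWalkFrom E (path v) s v

/-- `(a, b)` is an edge of the rooted tree `T`. -/
def RootedTree.IsEdge {E : V → V → Prop} {s : V} (T : RootedTree E s) (a b : V) : Prop :=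
  b ≠ s ∧ T.parent b = a

/-- `T` is a shortest-path tree for the weight function `ω`:
every tree path from the root is a shortest path. -/
def IsSPT {E : V → V → Prop} {s : V} (ω : V → V → ℝ) (T : RootedTree E s) : Prop :=
  ∀ v, len ω (T.path v) = dist E ω s v

lemma edgeList_nil : edgeList ([] : List V) = [] := rfl
lemma edgeList_single (a : V) : edgeList [a] = [] := rfl
lemma edgeList_cons_cons (a b : V) (l : List V) :
    edgeList (a :: b :: l) = (a, b) :: edgeList (b :: l) := rfl

lemma len_nil (ω : V → V → ℝ) : len ω ([] : List V) = 0 := rfl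
lemma len_single (ω : V → V → ℝ) (a : V) : len ω [a] = 0 := rfl
lemma len_pair (ω : V → V → ℝ) (a b : V) : len ω [a, b] = ω a b := by
  simp [len, edgeList_cons_cons, edgeList_single]

lemma edgeList_append (l₁ l₂ : List V) (a : V) :
    edgeList (l₁ ++ a :: l₂) = edgeList (l₁ ++ [a]) ++ edgeList (a :: l₂) := by
  induction l₁ with
  | nil => simp [edgeList_single]
  | cons b t ih =>
    cases t with
    | nil => simp [edgeList_cons_cons, edgeList_single]
    | cons c t' =>
      simp only [List.cons_append, edgeList_cons_cons] at ih ⊢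
      rw [ih]

lemma len_append (ω : V → V → ℝ) (l₁ l₂ : List V) (a : V) :
    len ω (l₁ ++ a :: l₂) = len ω (l₁ ++ [a]) + len ω (a :: l₂) := by
  unfold len; rw [edgeList_append]; simp

lemma mem_of_mem_edgeList {p : V × V} {l : List V} (h : p ∈ edgeList l) :
    p.1 ∈ l ∧ p.2 ∈ l := by
  obtain ⟨h1, h2⟩ := List.of_mem_zip (a := p.1) (b := p.2) (by exact h)
  exact ⟨h1, List.mem_of_mem_tail h2⟩

lemma len_congr {ω ω' : V → V → ℝ} {l : List V}
    (h : ∀ p ∈ edgeList l, ω' p.1 p.2 = ω p.1 p.2) : len ω' l = len ω l := by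
  unfold len; rw [List.map_congr_left h]

lemma len_le_len {ω ω' : V → V → ℝ} (h : ∀ a b, ω' a b ≤ ω a b) (l : List V) :
    len ω' l ≤ len ω l :=
  List.sum_le_sum fun p _ => h p.1 p.2

lemma edgeList_split {x y : V} {l : List V} (h : (x, y) ∈ edgeList l) :
    ∃ p q, l = p ++ x :: y :: q := by
  induction l with
  | nil => simp [edgeList_nil] at h
  | cons a t ih =>
    cases t with
    | nil => simp [edgeList_single] at h
    | cons b r =>
      rw [edgeList_cons_cons] at h
      rcases List.mem_cons.1 h with h | h
      · rw [Prod.mk.injEq] at h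
        obtain ⟨rfl, rfl⟩ := h
        exact ⟨[], r, rfl⟩
      · obtain ⟨p, q, hl⟩ := ih h
        exact ⟨a :: p, q, by rw [hl]; rfl⟩

lemma not_nodup_split {l : List V} (h : ¬ l.Nodup) :
    ∃ (v : V) (p m q : List V), l = p ++ v :: m ++ v :: q := by
  induction l with
  | nil => simp at h
  | cons a t ih =>
    rw [List.nodup_cons] at h
    by_cases hm : a ∈ t
    · obtain ⟨m, q, hm⟩ := List.append_of_mem hm
      exact ⟨a, [], m, q, by simp [hm]⟩
    · obtain ⟨v, p, m, q, rfl⟩ := ih (fun hn => h ⟨hm, hn⟩)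
      exact ⟨v, a :: p, m, q, rfl⟩


lemma cycle_remove {E : V → V → Prop} {ω : V → V → ℝ} (hG : ¬ HasNegCycle E ω)
    {v : V} {p m q : List V} (hc : List.Chain' E (p ++ v :: m ++ v :: q)) :
    List.Chain' E (p ++ v :: q) ∧
      len ω (p ++ v :: q) ≤ len ω (p ++ v :: m ++ v :: q) := by
  have hcyc : List.Chain' E ((v :: m) ++ [v]) :=
    hc.infix ⟨p, q, by simp⟩
  have hsuf : List.Chain' E (v :: q) :=
    hc.infix ⟨p ++ v :: m, [], by simp⟩
  have hpre : List.Chain' E (p ++ [v]) :=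
    hc.infix ⟨[], m ++ v :: q, by simp⟩
  have hlast : (p ++ [v]).getLast? = some v := by rw [List.getLast?_append]; rfl
  have hchain : List.Chain' E ((p ++ [v]) ++ q) := by
    rw [List.Chain', List.isChain_append]
    refine ⟨hpre, hsuf.tail, ?_⟩
    intro x hx y hy
    rw [hlast, Option.mem_some_iff] at hx
    subst hx
    cases q with
    | nil => simp at hy
    | cons c q' =>
      rw [List.head?_cons, Option.mem_some_iff] at hy
      subst hy
      exact (List.isChain_cons_cons.1 hsuf).1
  have hchain' : List.Chain' E (p ++ v :: q) := by
    rw [show p ++ v :: q = (p ++ [v]) ++ q by simp]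
    exact hchain
  refine ⟨hchain', ?_⟩
  have hcyc0 : 0 ≤ len ω ((v :: m) ++ [v]) := by
    by_contra hneg
    refine hG ⟨(v :: m) ++ [v], ⟨v, ⟨⟨by simp, hcyc⟩, by simp, ?_⟩, by simp⟩, by linarith⟩
    rw [List.getLast?_append]; rfl
  have h3 : len ω (p ++ v :: q) = len ω (p ++ [v]) + len ω (v :: q) := len_append ..
  have h1 : len ω (p ++ v :: m ++ v :: q) =
      len ω (p ++ [v]) + (len ω ((v :: m) ++ [v]) + len ω (v :: q)) := by
    have e : p ++ v :: m ++ v :: q = p ++ v :: (m ++ v :: q) := by simp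
    rw [e, len_append ω p (m ++ v :: q) v]
    congr 1
    have e2 : v :: (m ++ v :: q) = (v :: m) ++ v :: q := by simp
    rw [e2]
    exact len_append ω (v :: m) q v
  rw [h1, h3]
  linarith


lemma len_ge_of_chain' [Fintype V] {E : V → V → Prop} {ω : V → V → ℝ}
    (hG : ¬ HasNegCycle E ω) {M : ℝ} (hM : ∀ a b, -M ≤ ω a b) (hM0 : 0 ≤ M) :
    ∀ (n : ℕ) (l : List V), l.length ≤ n → l.Chain' E →
      -(Fintype.card V * M) ≤ len ω l := by
  intro n
  induction n with
  | zero =>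
    intro l hl _
    have : l = [] := List.length_eq_zero_iff.1 (Nat.le_zero.1 hl)
    subst this
    rw [len_nil]
    have : (0 : ℝ) ≤ Fintype.card V * M := by positivity
    linarith
  | succ n ih =>
    intro l hl hc
    by_cases hnd : l.Nodup
    · set L := (edgeList l).map fun p => ω p.1 p.2 with hLdef
      have hlen : L.length ≤ Fintype.card V := by
        have h1 : (edgeList l).length ≤ l.length := by
          simp only [edgeList, List.length_zip]
          omega
        calc L.length = (edgeList l).length := by rw [hLdef, List.length_map]
          _ ≤ l.length := h1
          _ ≤ Fintype.card V := hnd.length_le_card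
      have hsum : (L.map Neg.neg).sum ≤ (L.map Neg.neg).length • M := by
        apply List.sum_le_card_nsmul
        intro x hx
        obtain ⟨y, hy, rfl⟩ := List.mem_map.1 hx
        obtain ⟨pr, hp, rfl⟩ := List.mem_map.1 hy
        have := hM pr.1 pr.2
        show -(ω pr.1 pr.2) ≤ M
        linarith
      have hnegsum : (L.map Neg.neg).sum = -L.sum := by
        induction L with
        | nil => simp
        | cons a t iht => simp [iht]; ring
      have hfin : -L.sum ≤ (Fintype.card V : ℝ) * M := by
        calc -L.sum = (L.map Neg.neg).sum := hnegsum.symm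
          _ ≤ (L.map Neg.neg).length • M := hsum
          _ = L.length * M := by rw [List.length_map, nsmul_eq_mul]
          _ ≤ (Fintype.card V : ℝ) * M :=
            mul_le_mul_of_nonneg_right (Nat.cast_le.2 hlen) hM0
      have hll : len ω l = L.sum := rfl
      linarith
    · obtain ⟨v, p, m, q, rfl⟩ := not_nodup_split hnd
      obtain ⟨hc', hle⟩ := cycle_remove hG hc
      have hlen : (p ++ v :: q).length ≤ n := by
        simp only [List.length_append, List.length_cons] at hl ⊢
        omega
      exact le_trans (ih _ hlen hc') hle

lemma dist_bddBelow [Fintype V] {E : V → V → Prop} {ω : V → V → ℝ}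
    (hG : ¬ HasNegCycle E ω) (s v : V) :
    BddBelow {L : ℝ | ∃ l, IsWalkFrom E l s v ∧ len ω l = L} := by
  haveI : Nonempty (V × V) := ⟨(s, s)⟩
  set M := Finset.univ.sup' Finset.univ_nonempty (fun p : V × V => |ω p.1 p.2|) with hMdef
  have hM : ∀ a b, -M ≤ ω a b := by
    intro a b
    have h1 : |ω a b| ≤ M :=
      Finset.le_sup' (fun p : V × V => |ω p.1 p.2|) (Finset.mem_univ (a, b))
    have := neg_abs_le (ω a b)
    linarith
  have hM0 : 0 ≤ M :=
    le_trans (abs_nonneg _)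
      (Finset.le_sup' (fun p : V × V => |ω p.1 p.2|) (Finset.mem_univ (s, s)))
  refine ⟨-(Fintype.card V * M), ?_⟩
  rintro L ⟨l, hw, rfl⟩
  exact len_ge_of_chain' hG hM hM0 l.length l le_rfl hw.1.2


lemma option_some_or {α : Type*} (a : α) (o : Option α) : (Option.some a).or o = some a := rfl
lemma option_none_or {α : Type*} (o : Option α) : (Option.none : Option α).or o = o := rfl

lemma len_cons_cons (ω : V → V → ℝ) (a b : V) (l : List V) :
    len ω (a :: b :: l) = ω a b + len ω (b :: l) := by
  simp [len, edgeList_cons_cons]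

lemma exists_getLast_decomp {l : List V} {x : V} (h : l.getLast? = some x) :
    ∃ p, l = p ++ [x] := by
  cases l with
  | nil => simp at h
  | cons a t =>
    refine ⟨(a :: t).dropLast, ?_⟩
    have h2 : (a :: t).getLast (by simp) = x := by
      rwa [List.getLast?_eq_getLast (l := a :: t) (by simp), Option.some_inj] at h
    rw [← h2]
    exact (List.dropLast_append_getLast (by simp)).symm

lemma walk_append {E : V → V → Prop} (ω : V → V → ℝ) {l₁ l₂ : List V} {s x u : V}
    (h₁ : IsWalkFrom E l₁ s x) (h₂ : IsWalkFrom E l₂ x u) :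
    ∃ l, IsWalkFrom E l s u ∧ len ω l = len ω l₁ + len ω l₂ := by
  obtain ⟨⟨hne₁, hc₁⟩, hh₁, hl₁⟩ := h₁
  obtain ⟨⟨hne₂, hc₂⟩, hh₂, hl₂⟩ := h₂
  cases l₂ with
  | nil => simp at hh₂
  | cons a q =>
    rw [List.head?_cons, Option.some_inj] at hh₂
    subst hh₂
    cases q with
    | nil =>
      simp only [List.getLast?_singleton, Option.some_inj] at hl₂
      subst hl₂
      exact ⟨l₁, ⟨⟨hne₁, hc₁⟩, hh₁, hl₁⟩, by rw [len_single]; ring⟩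
    | cons y q' =>
      obtain ⟨p, rfl⟩ := exists_getLast_decomp hl₁
      refine ⟨(p ++ [a]) ++ (y :: q'), ⟨⟨by simp, ?_⟩, ?_, ?_⟩, ?_⟩
      · rw [List.Chain', List.isChain_append]
        refine ⟨hc₁, hc₂.tail, ?_⟩
        intro c hc d hd
        rw [List.getLast?_append, Option.mem_def] at hc
        simp only [List.getLast?_singleton, option_some_or, Option.some_inj] at hc
        subst hc
        rw [List.head?_cons, Option.mem_def, Option.some_inj] at hd
        subst hd
        exact (List.isChain_cons_cons.1 hc₂).1
      · rw [List.head?_append, hh₁, option_some_or]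
      · rw [List.getLast?_append]
        rw [List.getLast?_cons_cons] at hl₂
        rw [hl₂, option_some_or]

      · have e : (p ++ [a]) ++ y :: q' = p ++ a :: y :: q' := by simp
        rw [e, len_append ω p (y :: q') a, len_cons_cons]

lemma exists_crossing {A : Set V} {u : V} :
    ∀ l : List V, l.getLast? = some u → u ∉ A → (∃ a ∈ l, a ∈ A) →
      ∃ p x y q, l = p ++ x :: y :: q ∧ x ∈ A ∧ ∀ z ∈ y :: q, z ∉ A := by
  intro l
  induction l with
  | nil => intro h; simp at h
  | cons a t ih =>
    intro hlast hu hex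
    by_cases hA : ∃ b ∈ t, b ∈ A
    · have hne : t ≠ [] := by rintro rfl; simp at hA
      have hlast' : t.getLast? = some u := by
        cases ht : t.getLast? with
        | none => exact absurd (List.getLast?_eq_none_iff.1 ht) hne
        | some w =>
          have h2 : (a :: t).getLast? = some w := by
            rw [show a :: t = [a] ++ t from rfl, List.getLast?_append, ht]; rfl
          rw [h2, Option.some_inj] at hlast
          rw [hlast]
      obtain ⟨p, x, y, q, ht2, hx, hall⟩ := ih hlast' hu hA
      exact ⟨a :: p, x, y, q, by rw [ht2]; rfl, hx, hall⟩
    · push_neg at hA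
      have haA : a ∈ A := by
        obtain ⟨b, hb, hbA⟩ := hex
        rcases List.mem_cons.1 hb with rfl | hb
        · exact hbA
        · exact absurd hbA (hA b hb)
      cases t with
      | nil =>
        simp only [List.getLast?_singleton, Option.some_inj] at hlast
        subst hlast
        exact absurd haA hu
      | cons y q =>
        exact ⟨[], a, y, q, rfl, haA, fun z hz => hA z hz⟩

theorem statement_17
    {V : Type*} [Fintype V] (E : V → V → Prop) (ω ω' : V → V → ℝ) (s x₀ y₀ : V)
    (hE₀ : E x₀ y₀)
    (hreach : ∀ v, ∃ l, IsWalkFrom E l s v)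
    (hω' : ∀ a b, (a, b) ≠ (x₀, y₀) → ω' a b = ω a b)
    (hG : ¬ HasNegCycle E ω)
    (hθ : ω' x₀ y₀ - ω x₀ y₀ < 0) (hG' : ¬ HasNegCycle E ω')
    (T : RootedTree E s) (hT : IsSPT ω T)
    (A : Set V) (hsA : s ∈ A) (hy₀A : y₀ ∈ A)
    (htrav : ∀ v, Traverses (T.path v) (x₀, y₀) → v ∈ A)
    (hbd : ∀ x y, E x y → x ∈ A → y ∉ A → dist E ω s y ≤ dist E ω' s x + ω x y) :
    ∀ u ∉ A, dist E ω' s u = dist E ω s u := by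
  intro u hu
  have bbG : ∀ v, BddBelow {L : ℝ | ∃ l, IsWalkFrom E l s v ∧ len ω l = L} :=
    fun v => dist_bddBelow hG s v
  have bbG' : ∀ v, BddBelow {L : ℝ | ∃ l, IsWalkFrom E l s v ∧ len ω' l = L} :=
    fun v => dist_bddBelow hG' s v
  have hωle : ∀ a b, ω' a b ≤ ω a b := by
    intro a b
    by_cases h : (a, b) = (x₀, y₀)
    · rw [Prod.mk.injEq] at h
      obtain ⟨rfl, rfl⟩ := h
      linarith
    · rw [hω' a b h]
  have h1 : dist E ω' s u ≤ dist E ω s u := by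
    obtain ⟨l0, hl0⟩ := hreach u
    refine le_csInf ⟨len ω l0, l0, hl0, rfl⟩ ?_
    rintro L ⟨l, hl, rfl⟩
    exact le_trans (csInf_le (bbG' u) ⟨l, hl, rfl⟩) (len_le_len hωle l)
  have h2 : dist E ω s u ≤ dist E ω' s u := by
    obtain ⟨l0, hl0⟩ := hreach u
    refine le_csInf ⟨len ω' l0, l0, hl0, rfl⟩ ?_
    rintro L ⟨l, hl, rfl⟩
    obtain ⟨⟨hne, hchain⟩, hhead, hlast⟩ := hl
    have hsl : s ∈ l := List.mem_of_mem_head? (by rw [hhead]; rfl)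
    obtain ⟨p, x, y, q, rfl, hxA, hall⟩ := exists_crossing l hlast hu ⟨s, hsl, hsA⟩
    have hEy : E x y := List.isChain_pair.1 (hchain.infix ⟨p, q, by simp⟩)
    have hyA : y ∉ A := hall y (List.mem_cons_self (a := y) (l := q))
    -- prefix walk from s to x
    have hph : (p ++ [x]).head? = some s := by
      have e : p ++ x :: y :: q = (p ++ [x]) ++ (y :: q) := by simp
      rw [e, List.head?_append] at hhead
      rcases hp : (p ++ [x]).head? with _ | c
      · simp at hp
      · rw [hp, option_some_or] at hhead
        exact hhead
    have hpre : IsWalkFrom E (p ++ [x]) s x :=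
      ⟨⟨by simp, hchain.infix ⟨[], y :: q, by simp⟩⟩, hph,
        by rw [List.getLast?_append]; rfl⟩
    -- suffix walk from y to u
    have hql : (y :: q).getLast? = some u := by
      cases hq : (y :: q).getLast? with
      | none => simp at hq
      | some w =>
        have h3 : (p ++ x :: y :: q).getLast? = some w := by
          rw [List.getLast?_append, List.getLast?_cons_cons, hq]; rfl
        rw [h3, Option.some_inj] at hlast
        rw [hlast]
    have hsuf : IsWalkFrom E (y :: q) y u :=
      ⟨⟨by simp, hchain.infix ⟨p ++ [x], [], by simp⟩⟩, rfl, hql⟩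
    -- weights agree off the modified edge
    have hyney₀ : y ≠ y₀ := fun h => hyA (h ▸ hy₀A)
    have hω'xy : ω' x y = ω x y := by
      apply hω'
      intro h
      rw [Prod.mk.injEq] at h
      exact hyney₀ h.2
    have hsuf_len : len ω' (y :: q) = len ω (y :: q) := by
      apply len_congr
      intro pr hpr
      apply hω'
      intro hEq
      have : pr.2 ∈ y :: q := (mem_of_mem_edgeList hpr).2
      rw [Prod.mk.injEq] at hEq
      exact (hall pr.2 this) (by rw [hEq.2]; exact hy₀A)
    have hsplit : len ω' (p ++ x :: y :: q) =
        len ω' (p ++ [x]) + ω' x y + len ω' (y :: q) := by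
      rw [len_append ω' p (y :: q) x, len_cons_cons]
      ring
    have i1 : dist E ω' s x ≤ len ω' (p ++ [x]) := csInf_le (bbG' x) ⟨_, hpre, rfl⟩
    have i2 : dist E ω s y ≤ dist E ω' s x + ω x y := hbd x y hEy hxA hyA
    have i3 : dist E ω s u ≤ dist E ω s y + len ω (y :: q) := by
      have key : dist E ω s u - len ω (y :: q) ≤ dist E ω s y := by
        obtain ⟨w0, hw0⟩ := hreach y
        refine le_csInf ⟨len ω w0, w0, hw0, rfl⟩ ?_
        rintro L ⟨w, hw, rfl⟩
        obtain ⟨ll, hll, hlen⟩ := walk_append ω hw hsuf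
        have h4 : dist E ω s u ≤ len ω ll := csInf_le (bbG u) ⟨ll, hll, rfl⟩
        rw [hlen] at h4
        linarith
      linarith
    calc dist E ω s u ≤ dist E ω s y + len ω (y :: q) := i3
      _ ≤ dist E ω' s x + ω x y + len ω (y :: q) := by linarith
      _ ≤ len ω' (p ++ [x]) + ω' x y + len ω' (y :: q) := by
          rw [hω'xy, hsuf_len]; linarith
      _ = len ω' (p ++ x :: y :: q) := hsplit.symm
  linarith


end DynSPT
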